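/- (Theorem 2.2(ii), stable support) There exist K ∈ ℕ and index sets I*, A* with I* ∪ A* = {1,…,n} and I* ∩ A* = ∅ such that for every k > K: x_i^k ≠ 0 for all i ∈ I* and x_i^k = 0 for all i ∈ A*. -/

import Mathlib

open Filter
open scoped BigOperators InnerProductSpace

noncomputable section

/-- Real n-dimensional Euclidean space. -/
abbrev Vec (n : ℕ) := EuclideanSpace ℝ (Fin n)

/-- The smoothed objective `F(x, ε) = f(x) + λ ∑ᵢ (|xᵢ| + εᵢ)^p`. -/
def Fobj (n : ℕ) (p lam : ℝ) (f : Vec n → ℝ) (z : Vec n) (ε : Fin n → ℝ) : ℝ :=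
  f z + lam * ∑ i, (|z i| + ε i) ^ p

/-- The merit function `ψ(x, y, ε) = F(x, ε) + (β/2)‖x − y‖²`. -/
def psiObj (n : ℕ) (p lam β : ℝ) (f : Vec n → ℝ) (z y : Vec n) (ε : Fin n → ℝ) : ℝ :=
  Fobj n p lam f z ε + β / 2 * ‖z - y‖ ^ 2

/-- The weighted-ℓ₁ subproblem objective at iteration `k`:
`⟨∇f(yₖ), z⟩ + (β/2)‖z − yₖ‖² + λ ∑ᵢ wᵢᵏ |zᵢ|` with `wᵢᵏ = p(|xᵢᵏ| + εᵢᵏ)^{p−1}`. -/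
def subObj (n : ℕ) (p lam β : ℝ) (f : Vec n → ℝ) (xk yk : Vec n) (εk : Fin n → ℝ)
    (z : Vec n) : ℝ :=
  ⟪gradient f yk, z⟫_ℝ + β / 2 * ‖z - yk‖ ^ 2
    + lam * ∑ i, (p * (|xk i| + εk i) ^ (p - 1)) * |z i|

/-- All the hypotheses of the EIRL1 algorithm (Algorithm 1) together with
Assumption 2.1.  The convention `x⁻¹ = x⁰` is encoded through truncated
subtraction on ℕ (`x (k-1) = x 0` for `k = 0`). -/
structure EIRL1 (n : ℕ) (p lam β Lf μ αbar : ℝ) (f : Vec n → ℝ)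
    (x y : ℕ → Vec n) (ε : ℕ → Fin n → ℝ) (α : ℕ → ℝ) : Prop where
  hn : 1 ≤ n
  hp0 : 0 < p
  hp1 : p < 1
  hlam : 0 < lam
  hμ0 : 0 < μ
  hμ1 : μ < 1
  hLf : 0 ≤ Lf
  hβ : Lf < β
  hconv : ConvexOn ℝ Set.univ f
  hdiff : ContDiff ℝ 1 f
  hlip : ∀ a b, ‖gradient f a - gradient f b‖ ≤ Lf * ‖a - b‖
  hαbar0 : 0 ≤ αbar
  hαbar1 : αbar < 1
  hα0 : ∀ k, 0 ≤ α k
  hα1 : ∀ k, α k ≤ αbar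
  hε0 : ∀ i, 0 < ε 0 i
  hεpos : ∀ k i, 0 < ε (k + 1) i
  hεdec : ∀ k i, ε (k + 1) i ≤ μ * ε k i
  hy : ∀ k, y k = x k + α k • (x k - x (k - 1))
  hmin : ∀ k z, z ≠ x (k + 1) →
    subObj n p lam β f (x k) (y k) (ε k) (x (k + 1)) < subObj n p lam β f (x k) (y k) (ε k) z
  hlevel : Bornology.IsBounded {z : Vec n | Fobj n p lam f z 0 ≤ Fobj n p lam f (x 0) (ε 0)}

/-! The merit function `ψ(xᵏ, xᵏ⁻¹, εᵏ)` drops by at least `β (1 - ᾱ²) / 2 · ‖xᵏ - xᵏ⁻¹‖²` per step: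
the descent lemma for `f`, the `β`-strong convexity of the subproblem and the concavity of
`t ↦ t ^ p` combine into this decrease. Hence the iterates stay in the bounded level set and
`xᵏ⁺¹ - xᵏ → 0`. The optimality condition of the weighted `ℓ₁` subproblem reads
`λ p (|xᵢᵏ| + εᵢᵏ) ^ (p - 1) = |∇f(yᵏ)ᵢ + β (xᵢᵏ⁺¹ - yᵢᵏ)|` whenever `xᵢᵏ⁺¹ ≠ 0`, and the right
side is bounded, so such a coordinate has `|xᵢᵏ| + εᵢᵏ ≥ c` for a fixed `c > 0`. As `εᵏ → 0` and
the steps shrink, eventually no coordinate can switch on or off. -/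

open Set Topology

lemma Real.rpow_le_tangent {p r s : ℝ} (hp0 : 0 ≤ p) (hp1 : p ≤ 1) (hr : 0 < r) (hs : 0 ≤ s) :
    s ^ p ≤ r ^ p + p * r ^ (p - 1) * (s - r) := by
  have hb := rpow_one_add_le_one_add_mul_self (s := s / r - 1)
    (by linarith [div_nonneg hs hr.le]) hp0 hp1
  rw [add_sub_cancel, Real.div_rpow hs hr.le, div_le_iff₀ (by positivity)] at hb
  calc s ^ p ≤ (1 + p * (s / r - 1)) * r ^ p := hb
    _ = r ^ p + p * r ^ (p - 1) * (s - r) := by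
      rw [Real.rpow_sub_one hr.ne']; field_simp

lemma abs_eq_abs_of_forall_le {a b c d : ℝ} (ha : a ≠ 0)
    (h : ∀ t, c * |a| ≤ d * t + b * t ^ 2 + c * |a + t|) : |d| = |c| := by
  have hmin : IsLocalMin (fun t => d * t + b * t ^ 2 + c * |a + t|) 0 :=
    Eventually.of_forall fun t => by simpa using h t
  have hderiv : HasDerivAt (fun t => d * t + b * t ^ 2 + c * |a + t|)
      (d + c * SignType.sign a) 0 := by
    have habs : HasDerivAt (fun t => |a + t|) (SignType.sign a : ℝ) 0 :=
      HasDerivAt.comp_const_add a 0 (by simpa using hasDerivAt_abs ha)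
    refine ((((hasDerivAt_id' (0 : ℝ)).const_mul d).add
      ((hasDerivAt_pow 2 (0 : ℝ)).const_mul b)).add (habs.const_mul c)).congr_deriv ?_
    norm_num
  have hzero := hmin.hasDerivAt_eq_zero hderiv
  rcases ha.lt_or_gt with ha | ha
  · simp only [sign_neg ha, SignType.coe_neg, SignType.coe_one, mul_neg, mul_one] at hzero
    rw [sub_eq_zero.1 hzero]
  · simp only [sign_pos ha, SignType.coe_one, mul_one] at hzero
    rw [eq_neg_of_add_eq_zero_left hzero, abs_neg]

lemma exists_forall_ge_eq_of_eventually_succ_eq {α : Type*} {u : ℕ → α}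
    (h : ∀ᶠ k in atTop, u (k + 1) = u k) : ∃ K, ∀ k ≥ K, u k = u K := by
  obtain ⟨K, hK⟩ := eventually_atTop.1 h
  refine ⟨K, fun k hk => ?_⟩
  induction k, hk using Nat.le_induction with
  | base => rfl
  | succ k hk ih => rw [hK k hk, ih]

lemma summable_of_add_mul_le {u d : ℕ → ℝ} {c m : ℝ} (hc : 0 < c) (hd : ∀ k, 0 ≤ d k)
    (hu : ∀ k, u (k + 1) + c * d k ≤ u k) (hm : ∀ k, m ≤ u k) : Summable d := by
  refine summable_of_sum_range_le hd (c := (u 0 - m) / c) fun N => ?_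
  have htel : ∀ N, c * ∑ k ∈ Finset.range N, d k ≤ u 0 - u N := by
    intro N
    induction N with
    | zero => simp
    | succ N ih => rw [Finset.sum_range_succ, mul_add]; linarith [hu N]
  rw [le_div_iff₀ hc, mul_comm]
  linarith [htel N, hm N]

lemma eventually_succ_ne_zero_iff {s : ℕ → ℝ} {c : ℝ} (hc : 0 < c)
    (hs : ∀ᶠ k in atTop, s (k + 1) ≠ 0 → c < |s k|)
    (hsub : Tendsto (fun k => s (k + 1) - s k) atTop (𝓝 0)) :
    ∀ᶠ k in atTop, (s (k + 1) ≠ 0 ↔ s k ≠ 0) := by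
  have hsmall : ∀ᶠ k in atTop, |s (k + 1) - s k| < c / 2 := by
    simpa [Real.dist_eq] using hsub.eventually (Metric.ball_mem_nhds 0 (half_pos hc))
  obtain ⟨K, hK⟩ := eventually_atTop.1 (hs.and hsmall)
  refine eventually_atTop.2 ⟨K + 1, fun k hk => ?_⟩
  obtain ⟨j, rfl⟩ : ∃ j, k = j + 1 := ⟨k - 1, by omega⟩
  obtain ⟨hj, hj'⟩ := hK j (by omega)
  obtain ⟨hk, hk'⟩ := hK (j + 1) (by omega)
  refine ⟨fun h => abs_pos.1 (hc.trans (hk h)), fun h => abs_pos.1 ?_⟩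
  -- `|s j| > c`, and two steps of size `< c / 2` cannot bring it to zero
  have := hj h
  linarith [abs_sub_abs_le_abs_sub (s j) (s (j + 1)),
    abs_sub_abs_le_abs_sub (s (j + 1)) (s (j + 2)), abs_sub_comm (s j) (s (j + 1)),
    abs_sub_comm (s (j + 1)) (s (j + 2))]

lemma ConvexOn.finset_sum {𝕜 E β ι : Type*} [Semiring 𝕜] [PartialOrder 𝕜] [AddCommMonoid E]
    [AddCommMonoid β] [PartialOrder β] [IsOrderedAddMonoid β] [SMul 𝕜 E] [Module 𝕜 β]
    {s : Set E} {t : Finset ι} {f : ι → E → β} (hs : Convex 𝕜 s)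
    (h : ∀ i ∈ t, ConvexOn 𝕜 s (f i)) : ConvexOn 𝕜 s fun x => ∑ i ∈ t, f i x := by
  classical
  induction t using Finset.induction_on with
  | empty => simpa using convexOn_const 0 hs
  | insert i t hi ih =>
    simp_rw [Finset.sum_insert hi]
    exact (h i (Finset.mem_insert_self i t)).add
      (ih fun j hj => h j (Finset.mem_insert_of_mem hj))

lemma StrongConvexOn.add_sq_le_of_forall_le {E : Type*} [NormedAddCommGroup E]
    [NormedSpace ℝ E] {φ : E → ℝ} {m : ℝ} {u : E} (hφ : StrongConvexOn univ m φ)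
    (hu : ∀ z, φ u ≤ φ z) (v : E) : φ u + m / 2 * ‖v - u‖ ^ 2 ≤ φ v := by
  have hsegment : ∀ t ∈ Ioo (0 : ℝ) 1, φ u + m / 2 * ‖v - u‖ ^ 2 * (1 - t) ≤ φ v := by
    rintro t ⟨ht0, ht1⟩
    have h := (hu _).trans <|
      hφ.2 (mem_univ u) (mem_univ v) (sub_nonneg.2 ht1.le) ht0.le (sub_add_cancel 1 t)
    rw [smul_eq_mul, smul_eq_mul, norm_sub_rev] at h
    nlinarith
  have hlim : Tendsto (fun t : ℝ => φ u + m / 2 * ‖v - u‖ ^ 2 * (1 - t)) (𝓝[>] 0)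
      (𝓝 (φ u + m / 2 * ‖v - u‖ ^ 2)) := by
    refine tendsto_nhdsWithin_of_tendsto_nhds ?_
    exact (by fun_prop : Continuous fun t : ℝ => φ u + m / 2 * ‖v - u‖ ^ 2 * (1 - t)).tendsto' 0 _
      (by simp)
  exact le_of_tendsto hlim <| eventually_of_mem (Ioo_mem_nhdsGT one_pos) hsegment

section Gradient

variable {E : Type*} [NormedAddCommGroup E] [InnerProductSpace ℝ E] [CompleteSpace E]
  {f : E → ℝ}

lemma hasDerivAt_comp_lineMap (hf : Differentiable ℝ f) (a b : E) (t : ℝ) :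
    HasDerivAt (fun s => f (AffineMap.lineMap a b s))
      ⟪gradient f (AffineMap.lineMap a b t), b - a⟫_ℝ t :=
  (hf _).hasGradientAt.hasFDerivAt.comp_hasDerivAt t AffineMap.hasDerivAt_lineMap

lemma ConvexOn.add_inner_gradient_le (hconv : ConvexOn ℝ univ f) (hf : Differentiable ℝ f)
    (a b : E) : f a + ⟪gradient f a, b - a⟫_ℝ ≤ f b := by
  have hline : ConvexOn ℝ univ fun s : ℝ => f (AffineMap.lineMap a b s) :=
    hconv.comp_affineMap (AffineMap.lineMap a b)
  have h := hline.le_slope_of_hasDerivAt (mem_univ 0) (mem_univ 1) one_pos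
    (by simpa only [AffineMap.lineMap_apply_zero] using hasDerivAt_comp_lineMap hf a b 0)
  simp only [slope_def_field, AffineMap.lineMap_apply_zero, AffineMap.lineMap_apply_one, sub_zero,
    div_one] at h
  linarith

lemma le_add_inner_gradient_add_sq {L : ℝ} (hf : Differentiable ℝ f)
    (hlip : ∀ a b, ‖gradient f a - gradient f b‖ ≤ L * ‖a - b‖) (a b : E) :
    f b ≤ f a + ⟪gradient f a, b - a⟫_ℝ + L / 2 * ‖b - a‖ ^ 2 := by
  set q : ℝ → ℝ := fun t => f (AffineMap.lineMap a b t) - t * ⟪gradient f a, b - a⟫_ℝ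
    - L / 2 * ‖b - a‖ ^ 2 * t ^ 2
  have hq : ∀ t, HasDerivAt q (⟪gradient f (AffineMap.lineMap a b t), b - a⟫_ℝ
      - ⟪gradient f a, b - a⟫_ℝ - L / 2 * ‖b - a‖ ^ 2 * (2 * t)) t := fun t => by
    refine (((hasDerivAt_comp_lineMap hf a b t).sub
      ((hasDerivAt_id' t).mul_const ⟪gradient f a, b - a⟫_ℝ)).sub
      ((hasDerivAt_pow 2 t).const_mul (L / 2 * ‖b - a‖ ^ 2))).congr_deriv ?_
    norm_num
  have hq' : ∀ t ∈ interior (Icc (0 : ℝ) 1), deriv q t ≤ 0 := by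
    intro t ht
    rw [interior_Icc] at ht
    have hlipt : ⟪gradient f (AffineMap.lineMap a b t) - gradient f a, b - a⟫_ℝ
        ≤ L * t * ‖b - a‖ ^ 2 :=
      calc _ ≤ ‖gradient f (AffineMap.lineMap a b t) - gradient f a‖ * ‖b - a‖ :=
            real_inner_le_norm _ _
        _ ≤ L * ‖AffineMap.lineMap a b t - a‖ * ‖b - a‖ := by gcongr; exact hlip _ _
        _ = L * t * ‖b - a‖ ^ 2 := by
          rw [← vsub_eq_sub, AffineMap.lineMap_vsub_left, norm_smul, Real.norm_of_nonneg ht.1.le,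
            vsub_eq_sub]; ring
    rw [inner_sub_left] at hlipt
    rw [(hq t).deriv]
    linarith
  have hanti := antitoneOn_of_deriv_nonpos (convex_Icc 0 1)
    (HasDerivAt.continuousOn fun t _ => hq t)
    (fun t _ => (hq t).differentiableAt.differentiableWithinAt) hq'
    (left_mem_Icc.2 zero_le_one) (right_mem_Icc.2 zero_le_one) zero_le_one
  simp only [q, AffineMap.lineMap_apply_zero, AffineMap.lineMap_apply_one] at hanti
  linarith

end Gradient

section Subproblem

variable {n : ℕ} {p lam β : ℝ} {f : Vec n → ℝ} {xk yk : Vec n} {εk : Fin n → ℝ}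

lemma subObj_strongConvexOn (hp : 0 ≤ p) (hlam : 0 ≤ lam) (hε : ∀ i, 0 ≤ εk i) :
    StrongConvexOn univ β (subObj n p lam β f xk yk εk) := by
  have hsplit : (fun z => subObj n p lam β f xk yk εk z - β / 2 * ‖z‖ ^ 2) = fun z =>
      ⟪gradient f yk - β • yk, z⟫_ℝ + β / 2 * ‖yk‖ ^ 2
        + lam * ∑ i, p * (|xk i| + εk i) ^ (p - 1) * |z i| := by
    ext z
    simp only [subObj, norm_sub_sq_real, inner_sub_left, real_inner_smul_left, real_inner_comm yk z]
    ring
  rw [strongConvexOn_iff_convex, hsplit]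
  refine ((innerₛₗ ℝ _).convexOn convex_univ |>.add (convexOn_const _ convex_univ)).add
    (ConvexOn.smul hlam (ConvexOn.finset_sum convex_univ fun i _ => ?_))
  exact ((convexOn_norm convex_univ).comp_linearMap (EuclideanSpace.proj i).toLinearMap).smul
    (mul_nonneg hp (Real.rpow_nonneg (by linarith [abs_nonneg (xk i), hε i]) _))

lemma subObj_add_single (u : Vec n) (i : Fin n) (t : ℝ) :
    subObj n p lam β f xk yk εk (u + EuclideanSpace.single i t) =
      subObj n p lam β f xk yk εk u + (gradient f yk i + β * (u i - yk i)) * t + β / 2 * t ^ 2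
        + lam * (p * (|xk i| + εk i) ^ (p - 1)) * (|u i + t| - |u i|) := by
  have hsum : ∑ j, p * (|xk j| + εk j) ^ (p - 1) * |(u + EuclideanSpace.single i t) j|
      = ∑ j, p * (|xk j| + εk j) ^ (p - 1) * |u j|
        + p * (|xk i| + εk i) ^ (p - 1) * (|u i + t| - |u i|) := by
    rw [← sub_eq_iff_eq_add', ← Finset.sum_sub_distrib, Finset.sum_eq_single i]
    · simp [mul_sub]
    · intro j _ hj
      simp [hj]
    · simp
  simp only [subObj, hsum, inner_add_right, EuclideanSpace.inner_single_right, conj_trivial,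
    add_sub_right_comm u, norm_add_sq_real, PiLp.norm_single, Real.norm_eq_abs, sq_abs,
    PiLp.sub_apply]
  ring

lemma subObj_weight_eq_of_forall_le (hp : 0 ≤ p) (hlam : 0 ≤ lam) (hε : ∀ i, 0 ≤ εk i)
    {u : Vec n} (hu : ∀ z, subObj n p lam β f xk yk εk u ≤ subObj n p lam β f xk yk εk z)
    {i : Fin n} (hi : u i ≠ 0) :
    lam * (p * (|xk i| + εk i) ^ (p - 1)) = |gradient f yk i + β * (u i - yk i)| := by
  have hw : 0 ≤ lam * (p * (|xk i| + εk i) ^ (p - 1)) :=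
    mul_nonneg hlam (mul_nonneg hp (Real.rpow_nonneg (by linarith [abs_nonneg (xk i), hε i]) _))
  rw [← abs_of_nonneg hw]
  refine (abs_eq_abs_of_forall_le (b := β / 2) hi fun t => ?_).symm
  have := hu (u + EuclideanSpace.single i t)
  rw [subObj_add_single] at this
  linarith

end Subproblem

section Step

variable {n : ℕ} {p lam β L : ℝ} {f : Vec n → ℝ} {xk yk u : Vec n} {εk ε' : Fin n → ℝ}

lemma Fobj_zero_le (hp : 0 ≤ p) (hlam : 0 ≤ lam) (hε : ∀ i, 0 ≤ εk i) (z : Vec n) :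
    Fobj n p lam f z 0 ≤ Fobj n p lam f z εk := by
  simp only [Fobj, Pi.zero_apply, add_zero]
  gcongr with i
  exact le_add_of_nonneg_right (hε i)

lemma sum_rpow_le_add_sum_weight_mul (hp0 : 0 ≤ p) (hp1 : p ≤ 1) (hεk : ∀ i, 0 < εk i)
    (hε' : ∀ i, 0 ≤ ε' i) (hε'k : ∀ i, ε' i ≤ εk i) (u : Vec n) :
    ∑ i, (|u i| + ε' i) ^ p ≤ ∑ i, (|xk i| + εk i) ^ p
      + (∑ i, p * (|xk i| + εk i) ^ (p - 1) * |u i|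
        - ∑ i, p * (|xk i| + εk i) ^ (p - 1) * |xk i|) := by
  rw [← Finset.sum_sub_distrib, ← Finset.sum_add_distrib]
  gcongr with i
  have hr : 0 < |xk i| + εk i := add_pos_of_nonneg_of_pos (abs_nonneg _) (hεk i)
  have hw : 0 ≤ p * (|xk i| + εk i) ^ (p - 1) := mul_nonneg hp0 (Real.rpow_nonneg hr.le _)
  have := Real.rpow_le_tangent hp0 hp1 hr (add_nonneg (abs_nonneg (u i)) (hε' i))
  nlinarith [mul_le_mul_of_nonneg_left (hε'k i) hw]

lemma Fobj_add_sq_le_of_forall_subObj_le (hconv : ConvexOn ℝ univ f) (hf : Differentiable ℝ f)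
    (hlip : ∀ a b, ‖gradient f a - gradient f b‖ ≤ L * ‖a - b‖) (hLβ : L ≤ β)
    (hp0 : 0 ≤ p) (hp1 : p ≤ 1) (hlam : 0 ≤ lam) (hεk : ∀ i, 0 < εk i) (hε' : ∀ i, 0 ≤ ε' i)
    (hε'k : ∀ i, ε' i ≤ εk i)
    (hu : ∀ z, subObj n p lam β f xk yk εk u ≤ subObj n p lam β f xk yk εk z) :
    Fobj n p lam f u ε' + β / 2 * ‖u - xk‖ ^ 2 ≤ Fobj n p lam f xk εk + β / 2 * ‖xk - yk‖ ^ 2 := by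
  have hpen := mul_le_mul_of_nonneg_left
    (sum_rpow_le_add_sum_weight_mul (xk := xk) hp0 hp1 hεk hε' hε'k u) hlam
  have hdesc := le_add_inner_gradient_add_sq hf hlip yk u
  have hconvx := hconv.add_inner_gradient_le hf yk xk
  have hstrong := (subObj_strongConvexOn (f := f) (β := β) (yk := yk) hp0 hlam
    fun i => (hεk i).le).add_sq_le_of_forall_le hu xk
  have hgap : L / 2 * ‖u - yk‖ ^ 2 ≤ β / 2 * ‖u - yk‖ ^ 2 := by gcongr
  rw [inner_sub_right] at hdesc hconvx
  rw [norm_sub_rev xk u] at hstrong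
  simp only [Fobj, subObj] at *
  linarith

end Step

namespace EIRL1

variable {n : ℕ} {p lam β Lf μ αbar : ℝ} {f : Vec n → ℝ} {x y : ℕ → Vec n}
  {ε : ℕ → Fin n → ℝ} {α : ℕ → ℝ}

lemma eps_pos (H : EIRL1 n p lam β Lf μ αbar f x y ε α) : ∀ k i, 0 < ε k i
  | 0, i => H.hε0 i
  | k + 1, i => H.hεpos k i

lemma subObj_le (H : EIRL1 n p lam β Lf μ αbar f x y ε α) (k : ℕ) (z : Vec n) :
    subObj n p lam β f (x k) (y k) (ε k) (x (k + 1)) ≤ subObj n p lam β f (x k) (y k) (ε k) z := by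
  rcases eq_or_ne z (x (k + 1)) with rfl | hz
  exacts [le_rfl, (H.hmin k z hz).le]

lemma norm_sub_y_le (H : EIRL1 n p lam β Lf μ αbar f x y ε α) (k : ℕ) :
    ‖x k - y k‖ ≤ αbar * ‖x k - x (k - 1)‖ := by
  rw [H.hy k, sub_add_cancel_left, norm_neg, norm_smul, Real.norm_of_nonneg (H.hα0 k)]
  gcongr
  exact H.hα1 k

lemma beta_pos (H : EIRL1 n p lam β Lf μ αbar f x y ε α) : 0 < β :=
  H.hLf.trans_lt H.hβ

lemma decrease_coeff_pos (H : EIRL1 n p lam β Lf μ αbar f x y ε α) : 0 < β / 2 * (1 - αbar ^ 2) :=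
  mul_pos (half_pos H.beta_pos) (sub_pos.2 (pow_lt_one₀ H.hαbar0 H.hαbar1 two_ne_zero))

lemma psiObj_succ_add_le (H : EIRL1 n p lam β Lf μ αbar f x y ε α) (k : ℕ) :
    psiObj n p lam β f (x (k + 1)) (x k) (ε (k + 1))
        + β / 2 * (1 - αbar ^ 2) * ‖x k - x (k - 1)‖ ^ 2
      ≤ psiObj n p lam β f (x k) (x (k - 1)) (ε k) := by
  have hstep := Fobj_add_sq_le_of_forall_subObj_le H.hconv (H.hdiff.differentiable one_ne_zero)
    H.hlip H.hβ.le H.hp0.le H.hp1.le H.hlam.le (H.eps_pos k) (fun i => (H.eps_pos (k + 1) i).le)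
    (fun i => (H.hεdec k i).trans (mul_le_of_le_one_left (H.eps_pos k i).le H.hμ1.le))
    (H.subObj_le k)
  have hy : β / 2 * ‖x k - y k‖ ^ 2 ≤ β / 2 * (αbar ^ 2 * ‖x k - x (k - 1)‖ ^ 2) := by
    have := H.beta_pos
    rw [← mul_pow]
    gcongr
    exact H.norm_sub_y_le k
  simp only [psiObj]
  linarith

lemma psiObj_le_Fobj_zero (H : EIRL1 n p lam β Lf μ αbar f x y ε α) (k : ℕ) :
    psiObj n p lam β f (x k) (x (k - 1)) (ε k) ≤ Fobj n p lam f (x 0) (ε 0) := by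
  induction k with
  | zero => simp [psiObj]
  | succ k ih =>
    have := H.psiObj_succ_add_le k
    have := mul_nonneg H.decrease_coeff_pos.le (sq_nonneg ‖x k - x (k - 1)‖)
    simp only [Nat.add_sub_cancel]
    linarith

lemma exists_norm_le (H : EIRL1 n p lam β Lf μ αbar f x y ε α) : ∃ R, ∀ k, ‖x k‖ ≤ R := by
  obtain ⟨R, hR⟩ := isBounded_iff_forall_norm_le.1 H.hlevel
  refine ⟨R, fun k => hR _ ?_⟩
  calc Fobj n p lam f (x k) 0
      ≤ Fobj n p lam f (x k) (ε k) :=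
        Fobj_zero_le H.hp0.le H.hlam.le (fun i => (H.eps_pos k i).le) _
    _ ≤ psiObj n p lam β f (x k) (x (k - 1)) (ε k) :=
      le_add_of_nonneg_right (mul_nonneg (half_pos H.beta_pos).le (sq_nonneg _))
    _ ≤ _ := H.psiObj_le_Fobj_zero k

lemma tendsto_succ_sub (H : EIRL1 n p lam β Lf μ αbar f x y ε α) :
    Tendsto (fun k => x (k + 1) - x k) atTop (𝓝 0) := by
  obtain ⟨R, hR⟩ := H.exists_norm_le
  obtain ⟨m, hm⟩ :=
    (isCompact_closedBall (0 : Vec n) R).bddBelow_image H.hdiff.continuous.continuousOn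
  have hlow : ∀ k, m ≤ psiObj n p lam β f (x k) (x (k - 1)) (ε k) := fun k => by
    have hfx := hm (mem_image_of_mem f (mem_closedBall_zero_iff.2 (hR k)))
    have hpen : 0 ≤ lam * ∑ i, (|x k i| + ε k i) ^ p := mul_nonneg H.hlam.le <|
      Finset.sum_nonneg fun i _ => Real.rpow_nonneg (add_nonneg (abs_nonneg _) (H.eps_pos k i).le) _
    have := mul_nonneg (half_pos H.beta_pos).le (sq_nonneg ‖x k - x (k - 1)‖)
    simp only [psiObj, Fobj]
    linarith
  have hsum := summable_of_add_mul_le H.decrease_coeff_pos (fun k => sq_nonneg _)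
    H.psiObj_succ_add_le hlow
  have hsq : Tendsto (fun k => ‖x (k + 1) - x k‖ ^ 2) atTop (𝓝 0) :=
    hsum.tendsto_atTop_zero.comp (tendsto_add_atTop_nat 1)
  rw [tendsto_zero_iff_norm_tendsto_zero]
  simpa using hsq.sqrt

lemma norm_y_le (H : EIRL1 n p lam β Lf μ αbar f x y ε α) {R : ℝ} (hR : ∀ k, ‖x k‖ ≤ R) (k : ℕ) :
    ‖y k‖ ≤ 3 * R := by
  have hα : αbar * ‖x k - x (k - 1)‖ ≤ 1 * (R + R) :=
    mul_le_mul H.hαbar1.le (norm_sub_le_of_le (hR k) (hR (k - 1))) (norm_nonneg _) zero_le_one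
  linarith [norm_le_norm_add_norm_sub (x k) (y k), hR k, H.norm_sub_y_le k]

lemma exists_weight_le (H : EIRL1 n p lam β Lf μ αbar f x y ε α) :
    ∃ C, ∀ k i, x (k + 1) i ≠ 0 → lam * (p * (|x k i| + ε k i) ^ (p - 1)) ≤ C := by
  obtain ⟨R, hR⟩ := H.exists_norm_le
  have hβ := H.beta_pos.le
  refine ⟨‖gradient f 0‖ + Lf * (3 * R) + β * (R + 3 * R), fun k i hi => ?_⟩
  rw [subObj_weight_eq_of_forall_le H.hp0.le H.hlam.le (fun j => (H.eps_pos k j).le)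
    (H.subObj_le k) hi]
  have hgrad : ‖gradient f (y k)‖ ≤ ‖gradient f 0‖ + Lf * (3 * R) := by
    have := H.hlip (y k) 0
    rw [sub_zero] at this
    linarith [norm_le_norm_add_norm_sub' (gradient f (y k)) (gradient f 0),
      mul_le_mul_of_nonneg_left (H.norm_y_le hR k) H.hLf]
  calc |gradient f (y k) i + β * (x (k + 1) i - y k i)|
      = ‖(gradient f (y k) + β • (x (k + 1) - y k)) i‖ := by simp
    _ ≤ ‖gradient f (y k) + β • (x (k + 1) - y k)‖ := PiLp.norm_apply_le _ i
    _ ≤ ‖gradient f (y k)‖ + β * (‖x (k + 1)‖ + ‖y k‖) := by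
      grw [norm_add_le, norm_smul, Real.norm_of_nonneg hβ, norm_sub_le]
    _ ≤ _ := by grw [hgrad, hR (k + 1), H.norm_y_le hR k]

lemma exists_pos_le_abs_add_eps (H : EIRL1 n p lam β Lf μ αbar f x y ε α) :
    ∃ c > 0, ∀ k i, x (k + 1) i ≠ 0 → c ≤ |x k i| + ε k i := by
  obtain ⟨C, hC⟩ := H.exists_weight_le
  have hlp : 0 < lam * p := mul_pos H.hlam H.hp0
  refine ⟨(max C 1 / (lam * p)) ^ (p - 1)⁻¹, by positivity, fun k i hi => ?_⟩
  have hr : 0 < |x k i| + ε k i := add_pos_of_nonneg_of_pos (abs_nonneg _) (H.eps_pos k i)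
  rw [Real.rpow_inv_le_iff_of_neg (by positivity) hr (by linarith [H.hp1]), le_div_iff₀ hlp]
  calc (|x k i| + ε k i) ^ (p - 1) * (lam * p) = lam * (p * (|x k i| + ε k i) ^ (p - 1)) := by ring
    _ ≤ max C 1 := (hC k i hi).trans (le_max_left _ _)

lemma tendsto_eps (H : EIRL1 n p lam β Lf μ αbar f x y ε α) (i : Fin n) :
    Tendsto (fun k => ε k i) atTop (𝓝 0) := by
  have hle : ∀ k, ε k i ≤ ε 0 i * μ ^ k := by
    intro k
    induction k with
    | zero => simp
    | succ k ih =>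
      calc ε (k + 1) i ≤ μ * ε k i := H.hεdec k i
        _ ≤ μ * (ε 0 i * μ ^ k) := by gcongr; exact H.hμ0.le
        _ = ε 0 i * μ ^ (k + 1) := by ring
  refine squeeze_zero (fun k => (H.eps_pos k i).le) hle ?_
  simpa using (tendsto_pow_atTop_nhds_zero_of_lt_one H.hμ0.le H.hμ1).const_mul (ε 0 i)

lemma eventually_ne_zero_iff (H : EIRL1 n p lam β Lf μ αbar f x y ε α) (i : Fin n) :
    ∀ᶠ k in atTop, (x (k + 1) i ≠ 0 ↔ x k i ≠ 0) := by
  obtain ⟨c, hc, hlow⟩ := H.exists_pos_le_abs_add_eps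
  refine eventually_succ_ne_zero_iff (s := fun k => x k i) (half_pos hc) ?_ ?_
  · filter_upwards [(H.tendsto_eps i).eventually_lt_const (half_pos hc)] with k hk hne
    linarith [hlow k i hne]
  · simpa [Function.comp_def] using
      ((EuclideanSpace.proj i : Vec n →L[ℝ] ℝ).continuous.tendsto 0).comp H.tendsto_succ_sub

end EIRL1

/-- Theorem 2.2(ii): stable support.  After some iteration `K`, the support of
the iterates is a fixed index set `I*` (with complement `A*`). -/
theorem stmt_7 (n : ℕ) (p lam β Lf μ αbar : ℝ) (f : Vec n → ℝ)
    (x y : ℕ → Vec n) (ε : ℕ → Fin n → ℝ) (α : ℕ → ℝ)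
    (H : EIRL1 n p lam β Lf μ αbar f x y ε α) :
    ∃ (K : ℕ) (Istar Astar : Finset (Fin n)),
      Istar ∪ Astar = Finset.univ ∧ Istar ∩ Astar = ∅ ∧
      ∀ k > K, (∀ i ∈ Istar, x k i ≠ 0) ∧ (∀ i ∈ Astar, x k i = 0) := by
  classical
  obtain ⟨K, hK⟩ := exists_forall_ge_eq_of_eventually_succ_eq (u := fun k i => x k i ≠ 0)
    ((eventually_all.2 H.eventually_ne_zero_iff).mono fun k hk => funext fun i => propext (hk i))
  set Istar := Finset.univ.filter fun i => x K i ≠ 0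
  refine ⟨K, Istar, Istarᶜ, Finset.union_compl _, Finset.inter_compl _, fun k hk => ⟨?_, ?_⟩⟩
  all_goals
    intro i hi
    have := congrFun (hK k hk.le) i
    simp_all [Istar]
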